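/- arXiv:1501.03621 — 6 statements merged into one kernel-verified Lean document; each statement's English description precedes it below -/
import Mathlib

section
/- The six normal forms Sep, B₁, B₂, B₃, W, GHZ in ℂ² ⊗ ℂ² ⊗ ℂ² are pairwise non-SLOCC-equivalent; in particular the three-qubit Hilbert space has exactly six SLOCC classes of nonzero states. (Dür–Vidal–Cirac three-qubit classification, uniqueness part.) -/
open TensorProduct

noncomputable section

/-- The single-qubit space ℂ². -/
abbrev Qubit : Type := Fin 2 → ℂ

/-- The three-qubit Hilbert space ℂ² ⊗ ℂ² ⊗ ℂ². -/
abbrev ThreeQubit : Type := Qubit ⊗[ℂ] (Qubit ⊗[ℂ] Qubit)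

/-- Standard basis vector e₀ of ℂ². -/
def e0 : Qubit := ![1, 0]

/-- Standard basis vector e₁ of ℂ². -/
def e1 : Qubit := ![0, 1]

/-- SLOCC equivalence: ψ and φ are related by invertible local linear maps. -/
def SLOCC (ψ φ : ThreeQubit) : Prop :=
  ∃ g₁ g₂ g₃ : Qubit ≃ₗ[ℂ] Qubit,
    TensorProduct.map g₁.toLinearMap
      (TensorProduct.map g₂.toLinearMap g₃.toLinearMap) ψ = φ

def SepState : ThreeQubit := e0 ⊗ₜ[ℂ] (e0 ⊗ₜ[ℂ] e0)
def B1 : ThreeQubit := e0 ⊗ₜ[ℂ] (e0 ⊗ₜ[ℂ] e0) + e0 ⊗ₜ[ℂ] (e1 ⊗ₜ[ℂ] e1)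
def B2 : ThreeQubit := e0 ⊗ₜ[ℂ] (e0 ⊗ₜ[ℂ] e0) + e1 ⊗ₜ[ℂ] (e0 ⊗ₜ[ℂ] e1)
def B3 : ThreeQubit := e0 ⊗ₜ[ℂ] (e0 ⊗ₜ[ℂ] e0) + e1 ⊗ₜ[ℂ] (e1 ⊗ₜ[ℂ] e0)
def W : ThreeQubit := e1 ⊗ₜ[ℂ] (e0 ⊗ₜ[ℂ] e0) + e0 ⊗ₜ[ℂ] (e1 ⊗ₜ[ℂ] e0) + e0 ⊗ₜ[ℂ] (e0 ⊗ₜ[ℂ] e1)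
def GHZ : ThreeQubit := e0 ⊗ₜ[ℂ] (e0 ⊗ₜ[ℂ] e0) + e1 ⊗ₜ[ℂ] (e1 ⊗ₜ[ℂ] e1)

/-! Each of the following properties of a three-qubit tensor survives every local linear map
`g₁ ⊗ g₂ ⊗ g₃`, invertible or not: that one of the qubits splits off as a tensor factor, and the
vanishing of Cayley's hyperdeterminant, which gets multiplied by `(det g₁ det g₂ det g₃)²`.
A splitting forces the `2 × 2` minors of the matching flattening of the coefficient array to
vanish, which rules it out for the later normal forms. For each pair in the list, the earlier
normal form has one of these properties and the later one lacks it. -/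

def pairCoeff (j k : Fin 2) : Qubit ⊗[ℂ] Qubit →ₗ[ℂ] ℂ :=
  LinearMap.mul' ℂ ℂ ∘ₗ map (LinearMap.proj j) (LinearMap.proj k)

def coeff (i j k : Fin 2) : ThreeQubit →ₗ[ℂ] ℂ :=
  LinearMap.mul' ℂ ℂ ∘ₗ map (LinearMap.proj i) (pairCoeff j k)

@[simp] lemma pairCoeff_tmul (j k : Fin 2) (v w : Qubit) : pairCoeff j k (v ⊗ₜ w) = v j * w k := rfl

@[simp] lemma coeff_tmul (i j k : Fin 2) (u : Qubit) (z : Qubit ⊗[ℂ] Qubit) :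
    coeff i j k (u ⊗ₜ z) = u i * pairCoeff j k z := rfl

lemma coeff_leftComm (i j k : Fin 2) (ψ : ThreeQubit) :
    coeff i j k (TensorProduct.leftComm ℂ Qubit Qubit Qubit ψ) = coeff j i k ψ := by
  induction ψ using TensorProduct.induction_on with
  | zero => simp
  | tmul u z =>
    induction z using TensorProduct.induction_on with
    | zero => simp
    | tmul v w => simp [leftComm_tmul]; ring
    | add z z' hz hz' => simp_all [tmul_add]
  | add ψ ψ' hψ hψ' => simp_all

lemma coeff_assoc (i j k : Fin 2) (χ : Qubit ⊗[ℂ] Qubit) (w : Qubit) :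
    coeff i j k (TensorProduct.assoc ℂ Qubit Qubit Qubit (χ ⊗ₜ w)) = pairCoeff i j χ * w k := by
  induction χ using TensorProduct.induction_on with
  | zero => simp
  | tmul u v => simp [mul_assoc]
  | add χ χ' hχ hχ' => simp_all [add_tmul, add_mul]

lemma pairCoeff_map (g h : Qubit →ₗ[ℂ] Qubit) (j k : Fin 2) (z : Qubit ⊗[ℂ] Qubit) :
    pairCoeff j k (map g h z) = ∑ j', LinearMap.toMatrix' g j j' *
      ∑ k', LinearMap.toMatrix' h k k' * pairCoeff j' k' z := by
  induction z using TensorProduct.induction_on with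
  | zero => simp
  | tmul v w =>
    simp only [map_tmul, pairCoeff_tmul, ← LinearMap.toMatrix'_mulVec, Matrix.mulVec, dotProduct,
      Fin.sum_univ_two]
    ring
  | add z z' hz hz' => simp_all [mul_add, Finset.sum_add_distrib]

lemma coeff_map (f g h : Qubit →ₗ[ℂ] Qubit) (i j k : Fin 2) (ψ : ThreeQubit) :
    coeff i j k (map f (map g h) ψ) = ∑ i', LinearMap.toMatrix' f i i' *
      ∑ j', LinearMap.toMatrix' g j j' * ∑ k', LinearMap.toMatrix' h k k' * coeff i' j' k' ψ := by
  induction ψ using TensorProduct.induction_on with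
  | zero => simp
  | tmul u z =>
    simp only [map_tmul, coeff_tmul, pairCoeff_map, ← LinearMap.toMatrix'_mulVec, Matrix.mulVec,
      dotProduct, Fin.sum_univ_two]
    ring
  | add ψ ψ' hψ hψ' => simp_all [mul_add, Finset.sum_add_distrib]

def cayleyHyperdet {R : Type*} [CommRing R] (t : Fin 2 → Fin 2 → Fin 2 → R) : R :=
  t 0 0 0 ^ 2 * t 1 1 1 ^ 2 + t 0 0 1 ^ 2 * t 1 1 0 ^ 2 + t 0 1 0 ^ 2 * t 1 0 1 ^ 2
    + t 1 0 0 ^ 2 * t 0 1 1 ^ 2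
    - 2 * (t 0 0 0 * t 0 0 1 * t 1 1 0 * t 1 1 1 + t 0 0 0 * t 0 1 0 * t 1 0 1 * t 1 1 1
      + t 0 0 0 * t 1 0 0 * t 0 1 1 * t 1 1 1 + t 0 0 1 * t 0 1 0 * t 1 0 1 * t 1 1 0
      + t 0 0 1 * t 1 0 0 * t 0 1 1 * t 1 1 0 + t 0 1 0 * t 1 0 0 * t 0 1 1 * t 1 0 1)
    + 4 * (t 0 0 0 * t 0 1 1 * t 1 0 1 * t 1 1 0 + t 0 0 1 * t 0 1 0 * t 1 0 0 * t 1 1 1)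

section
variable {R : Type*} [CommRing R] (M : Matrix (Fin 2) (Fin 2) R) (t : Fin 2 → Fin 2 → Fin 2 → R)

lemma cayleyHyperdet_mul_first :
    cayleyHyperdet (fun i j k => ∑ i', M i i' * t i' j k) = M.det ^ 2 * cayleyHyperdet t := by
  simp only [cayleyHyperdet, Fin.sum_univ_two, Matrix.det_fin_two]; ring

lemma cayleyHyperdet_mul_second :
    cayleyHyperdet (fun i j k => ∑ j', M j j' * t i j' k) = M.det ^ 2 * cayleyHyperdet t := by
  simp only [cayleyHyperdet, Fin.sum_univ_two, Matrix.det_fin_two]; ring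

lemma cayleyHyperdet_mul_third :
    cayleyHyperdet (fun i j k => ∑ k', M k k' * t i j k') = M.det ^ 2 * cayleyHyperdet t := by
  simp only [cayleyHyperdet, Fin.sum_univ_two, Matrix.det_fin_two]; ring

end

def hyperdet (ψ : ThreeQubit) : ℂ := cayleyHyperdet fun i j k => coeff i j k ψ

lemma hyperdet_map (f g h : Qubit →ₗ[ℂ] Qubit) (ψ : ThreeQubit) :
    hyperdet (map f (map g h) ψ) =
      (LinearMap.det f * LinearMap.det g * LinearMap.det h) ^ 2 * hyperdet ψ := by
  simp only [hyperdet, coeff_map, ← LinearMap.det_toMatrix']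
  rw [cayleyHyperdet_mul_first, cayleyHyperdet_mul_second, cayleyHyperdet_mul_third]
  ring

def ClosedUnderLocalMaps (P : ThreeQubit → Prop) : Prop :=
  ∀ (f g h : Qubit →ₗ[ℂ] Qubit) (ψ : ThreeQubit), P ψ → P (map f (map g h) ψ)

lemma ClosedUnderLocalMaps.not_SLOCC {P : ThreeQubit → Prop} (hP : ClosedUnderLocalMaps P)
    {ψ φ : ThreeQubit} (hψ : P ψ) (hφ : ¬ P φ) : ¬ SLOCC ψ φ := by
  rintro ⟨g₁, g₂, g₃, rfl⟩
  exact hφ (hP _ _ _ ψ hψ)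

def SplitsOffFirst (ψ : ThreeQubit) : Prop :=
  ∃ (u : Qubit) (z : Qubit ⊗[ℂ] Qubit), ψ = u ⊗ₜ z

def SplitsOffSecond (ψ : ThreeQubit) : Prop :=
  ∃ (v : Qubit) (z : Qubit ⊗[ℂ] Qubit), ψ = TensorProduct.leftComm ℂ Qubit Qubit Qubit (v ⊗ₜ z)

def SplitsOffThird (ψ : ThreeQubit) : Prop :=
  ∃ (z : Qubit ⊗[ℂ] Qubit) (w : Qubit), ψ = TensorProduct.assoc ℂ Qubit Qubit Qubit (z ⊗ₜ w)

def IsGenuinelyEntangled (ψ : ThreeQubit) : Prop :=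
  ¬ SplitsOffFirst ψ ∧ ¬ SplitsOffSecond ψ ∧ ¬ SplitsOffThird ψ

lemma closedUnderLocalMaps_splitsOffFirst : ClosedUnderLocalMaps SplitsOffFirst := by
  rintro f g h _ ⟨u, z, rfl⟩
  exact ⟨f u, map g h z, map_tmul _ _ _ _⟩

lemma map_map_leftComm_tmul (f g h : Qubit →ₗ[ℂ] Qubit) (v : Qubit) (z : Qubit ⊗[ℂ] Qubit) :
    map f (map g h) (TensorProduct.leftComm ℂ Qubit Qubit Qubit (v ⊗ₜ z)) =
      TensorProduct.leftComm ℂ Qubit Qubit Qubit (g v ⊗ₜ map f h z) := by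
  induction z using TensorProduct.induction_on with
  | zero => simp
  | tmul u w => simp [leftComm_tmul]
  | add z z' hz hz' => simp_all [tmul_add]

lemma closedUnderLocalMaps_splitsOffSecond : ClosedUnderLocalMaps SplitsOffSecond := by
  rintro f g h _ ⟨v, z, rfl⟩
  exact ⟨g v, map f h z, map_map_leftComm_tmul f g h v z⟩

lemma closedUnderLocalMaps_splitsOffThird : ClosedUnderLocalMaps SplitsOffThird := by
  rintro f g h _ ⟨z, w, rfl⟩
  exact ⟨map f g z, h w, LinearMap.congr_fun (map_map_comp_assoc_eq f g h) (z ⊗ₜ w)⟩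

lemma closedUnderLocalMaps_hyperdet_eq_zero : ClosedUnderLocalMaps (hyperdet · = 0) := by
  intro f g h ψ hψ
  rw [hyperdet_map, hψ, mul_zero]

lemma SplitsOffFirst.coeff_mul_coeff {ψ : ThreeQubit} (hψ : SplitsOffFirst ψ)
    (i j k i' j' k' : Fin 2) :
    coeff i j k ψ * coeff i' j' k' ψ = coeff i j' k' ψ * coeff i' j k ψ := by
  obtain ⟨u, z, rfl⟩ := hψ
  simp only [coeff_tmul]; ring

lemma SplitsOffSecond.coeff_mul_coeff {ψ : ThreeQubit} (hψ : SplitsOffSecond ψ)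
    (i j k i' j' k' : Fin 2) :
    coeff i j k ψ * coeff i' j' k' ψ = coeff i' j k' ψ * coeff i j' k ψ := by
  obtain ⟨v, z, rfl⟩ := hψ
  simp only [coeff_leftComm, coeff_tmul]; ring

lemma SplitsOffThird.coeff_mul_coeff {ψ : ThreeQubit} (hψ : SplitsOffThird ψ)
    (i j k i' j' k' : Fin 2) :
    coeff i j k ψ * coeff i' j' k' ψ = coeff i' j' k ψ * coeff i j k' ψ := by
  obtain ⟨z, w, rfl⟩ := hψ
  simp only [coeff_assoc]; ring

lemma splitsOffFirst_sepState : SplitsOffFirst SepState := ⟨e0, e0 ⊗ₜ e0, rfl⟩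

lemma splitsOffSecond_sepState : SplitsOffSecond SepState := ⟨e0, e0 ⊗ₜ e0, rfl⟩

lemma splitsOffFirst_B1 : SplitsOffFirst B1 := ⟨e0, e0 ⊗ₜ e0 + e1 ⊗ₜ e1, (tmul_add _ _ _).symm⟩

lemma splitsOffSecond_B2 : SplitsOffSecond B2 :=
  ⟨e0, e0 ⊗ₜ e0 + e1 ⊗ₜ e1, by simp [B2, tmul_add, leftComm_tmul]⟩

lemma splitsOffThird_B3 : SplitsOffThird B3 :=
  ⟨e0 ⊗ₜ e0 + e1 ⊗ₜ e1, e0, by simp [B3, add_tmul]⟩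

lemma not_splitsOffSecond_B1 : ¬ SplitsOffSecond B1 := fun h => by
  simpa [B1, e0, e1] using h.coeff_mul_coeff 0 0 0 0 1 1

lemma not_splitsOffFirst_B2 : ¬ SplitsOffFirst B2 := fun h => by
  simpa [B2, e0, e1] using h.coeff_mul_coeff 0 0 0 1 0 1

lemma not_splitsOffFirst_B3 : ¬ SplitsOffFirst B3 := fun h => by
  simpa [B3, e0, e1] using h.coeff_mul_coeff 0 0 0 1 1 0

lemma not_splitsOffSecond_B3 : ¬ SplitsOffSecond B3 := fun h => by
  simpa [B3, e0, e1] using h.coeff_mul_coeff 0 0 0 1 1 0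

lemma isGenuinelyEntangled_W : IsGenuinelyEntangled W :=
  ⟨fun h => by simpa [W, e0, e1] using h.coeff_mul_coeff 1 0 0 0 1 0,
    fun h => by simpa [W, e0, e1] using h.coeff_mul_coeff 1 0 0 0 1 0,
    fun h => by simpa [W, e0, e1] using h.coeff_mul_coeff 1 0 0 0 0 1⟩

lemma isGenuinelyEntangled_GHZ : IsGenuinelyEntangled GHZ :=
  ⟨fun h => by simpa [GHZ, e0, e1] using h.coeff_mul_coeff 0 0 0 1 1 1,
    fun h => by simpa [GHZ, e0, e1] using h.coeff_mul_coeff 0 0 0 1 1 1,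
    fun h => by simpa [GHZ, e0, e1] using h.coeff_mul_coeff 0 0 0 1 1 1⟩

lemma hyperdet_W : hyperdet W = 0 := by
  simp [hyperdet, cayleyHyperdet, W, e0, e1]

lemma hyperdet_GHZ : hyperdet GHZ = 1 := by
  simp [hyperdet, cayleyHyperdet, GHZ, e0, e1]

/-- Dür–Vidal–Cirac classification, uniqueness: the six normal forms are pairwise
non-SLOCC-equivalent, so together with exhaustiveness there are exactly six SLOCC classes
of nonzero three-qubit states. -/
theorem three_qubit_SLOCC_six_classes :
    List.Pairwise (fun ψ φ : ThreeQubit => ¬ SLOCC ψ φ)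
      [SepState, B1, B2, B3, W, GHZ] := by
  have first := closedUnderLocalMaps_splitsOffFirst
  have second := closedUnderLocalMaps_splitsOffSecond
  have third := closedUnderLocalMaps_splitsOffThird
  obtain ⟨W₁, W₂, W₃⟩ := isGenuinelyEntangled_W
  obtain ⟨GHZ₁, GHZ₂, GHZ₃⟩ := isGenuinelyEntangled_GHZ
  simp only [List.pairwise_cons, List.forall_mem_cons, List.not_mem_nil, IsEmpty.forall_iff,
    implies_true, List.Pairwise.nil, and_true]
  exact ⟨⟨second.not_SLOCC splitsOffSecond_sepState not_splitsOffSecond_B1,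
      first.not_SLOCC splitsOffFirst_sepState not_splitsOffFirst_B2,
      first.not_SLOCC splitsOffFirst_sepState not_splitsOffFirst_B3,
      first.not_SLOCC splitsOffFirst_sepState W₁,
      first.not_SLOCC splitsOffFirst_sepState GHZ₁⟩,
    ⟨first.not_SLOCC splitsOffFirst_B1 not_splitsOffFirst_B2,
      first.not_SLOCC splitsOffFirst_B1 not_splitsOffFirst_B3,
      first.not_SLOCC splitsOffFirst_B1 W₁,
      first.not_SLOCC splitsOffFirst_B1 GHZ₁⟩,
    ⟨second.not_SLOCC splitsOffSecond_B2 not_splitsOffSecond_B3,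
      second.not_SLOCC splitsOffSecond_B2 W₂,
      second.not_SLOCC splitsOffSecond_B2 GHZ₂⟩,
    ⟨third.not_SLOCC splitsOffThird_B3 W₃, third.not_SLOCC splitsOffThird_B3 GHZ₃⟩,
    closedUnderLocalMaps_hyperdet_eq_zero.not_SLOCC hyperdet_W (by simp [hyperdet_GHZ])⟩

end
end

section
/- If (a, a'), (b, b'), (c, c') are three pairs of vectors in ℂ², each pair linearly independent, then the tensor a'⊗b⊗c + a⊗b'⊗c + a⊗b⊗c' ∈ ℂ² ⊗ ℂ² ⊗ ℂ² is SLOCC-equivalent to W = e₁⊗e₀⊗e₀ + e₀⊗e₁⊗e₀ + e₀⊗e₀⊗e₁. (A generic tangent vector to the Segre variety lies in the W orbit.) -/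
open TensorProduct

noncomputable section

/-! A linearly independent pair in `ℂ²` is a basis, so an invertible map sends it to `(e₀, e₁)`.
Tangent vectors to the Segre variety are carried to tangent vectors by local linear maps, and `W`
is the tangent vector at `e₀ ⊗ e₀ ⊗ e₀` in the direction `(e₁, e₁, e₁)`. -/

section SegreTangent

variable {R M₁ M₂ M₃ N₁ N₂ N₃ : Type*} [CommSemiring R]
  [AddCommMonoid M₁] [AddCommMonoid M₂] [AddCommMonoid M₃]
  [AddCommMonoid N₁] [AddCommMonoid N₂] [AddCommMonoid N₃]
  [Module R M₁] [Module R M₂] [Module R M₃] [Module R N₁] [Module R N₂] [Module R N₃]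

/-- The derivative at `t = 0` of `(a + t • a') ⊗ (b + t • b') ⊗ (c + t • c')`. -/
def segreTangent (a a' : M₁) (b b' : M₂) (c c' : M₃) : M₁ ⊗[R] (M₂ ⊗[R] M₃) :=
  a' ⊗ₜ (b ⊗ₜ c) + a ⊗ₜ (b' ⊗ₜ c) + a ⊗ₜ (b ⊗ₜ c')

theorem map_segreTangent (f : M₁ →ₗ[R] N₁) (g : M₂ →ₗ[R] N₂) (h : M₃ →ₗ[R] N₃)
    (a a' : M₁) (b b' : M₂) (c c' : M₃) :
    TensorProduct.map f (TensorProduct.map g h) (segreTangent a a' b b' c c') =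
      segreTangent (f a) (f a') (g b) (g b') (h c) (h c') := by
  simp only [segreTangent, map_add, TensorProduct.map_tmul]

end SegreTangent

theorem W_eq_segreTangent : W = segreTangent e0 e1 e0 e1 e0 e1 := rfl

theorem LinearIndependent.exists_linearEquiv_apply_eq_basis {K V ι : Type*} [DivisionRing K]
    [AddCommGroup V] [Module K V] [Fintype ι] {v : ι → V} (hv : LinearIndependent K v)
    (b : Module.Basis ι K V) : ∃ g : V ≃ₗ[K] V, ∀ i, g (v i) = b i := by
  have : FiniteDimensional K V := b.finiteDimensional_of_finite
  have hcard : Fintype.card ι = Module.finrank K V := (Module.finrank_eq_card_basis b).symm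
  let bv := basisOfLinearIndependentOfCardEqFinrank' v hv hcard
  refine ⟨bv.equiv b (Equiv.refl ι), fun i => ?_⟩
  rw [← coe_basisOfLinearIndependentOfCardEqFinrank' v hv hcard, Module.Basis.equiv_apply,
    Equiv.refl_apply]

theorem exists_linearEquiv_apply_eq_e0_e1 {x y : Qubit} (h : LinearIndependent ℂ ![x, y]) :
    ∃ g : Qubit ≃ₗ[ℂ] Qubit, g x = e0 ∧ g y = e1 := by
  obtain ⟨g, hg⟩ := h.exists_linearEquiv_apply_eq_basis (Pi.basisFun ℂ (Fin 2))
  refine ⟨g, (hg 0).trans ?_, (hg 1).trans ?_⟩ <;>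
    ext i <;> fin_cases i <;> simp [e0, e1]

/-- A generic tangent vector to the Segre variety lies in the W orbit:
if (a,a'), (b,b'), (c,c') are linearly independent pairs then
a'⊗b⊗c + a⊗b'⊗c + a⊗b⊗c' is SLOCC-equivalent to the W state. -/
theorem generic_tangent_is_W (a a' b b' c c' : Qubit)
    (ha : LinearIndependent ℂ ![a, a']) (hb : LinearIndependent ℂ ![b, b'])
    (hc : LinearIndependent ℂ ![c, c']) :
    SLOCC (a' ⊗ₜ[ℂ] (b ⊗ₜ[ℂ] c) + a ⊗ₜ[ℂ] (b' ⊗ₜ[ℂ] c) + a ⊗ₜ[ℂ] (b ⊗ₜ[ℂ] c')) W := by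
  obtain ⟨g₁, hga, hga'⟩ := exists_linearEquiv_apply_eq_e0_e1 ha
  obtain ⟨g₂, hgb, hgb'⟩ := exists_linearEquiv_apply_eq_e0_e1 hb
  obtain ⟨g₃, hgc, hgc'⟩ := exists_linearEquiv_apply_eq_e0_e1 hc
  refine ⟨g₁, g₂, g₃, ?_⟩
  change TensorProduct.map _ (TensorProduct.map _ _) (segreTangent a a' b b' c c') = W
  rw [map_segreTangent, W_eq_segreTangent]
  simp only [LinearEquiv.coe_coe, hga, hga', hgb, hgb', hgc, hgc']

end
end

section
/- The state W = e₁⊗e₀⊗e₀ + e₀⊗e₁⊗e₀ + e₀⊗e₀⊗e₁ ∈ ℂ² ⊗ ℂ² ⊗ ℂ² cannot be written as a sum of two rank-one tensors: there are no vectors a, b, c, a', b', c' ∈ ℂ² with W = a⊗b⊗c + a'⊗b'⊗c'. (W has tensor rank 3; it lies on the tangential variety but on no honest secant line of the Segre variety.) -/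
open TensorProduct

noncomputable section

/-!
Contract the first tensor factor against `x ∈ ℂ²`. For `a ⊗ b ⊗ c + a' ⊗ b' ⊗ c'` the
resulting `2 × 2` matrix is `(x ⬝ a) b cᵀ + (x ⬝ a') b' c'ᵀ`, whose determinant is the product
of the two linear forms `x ⬝ a`, `x ⬝ a'` times a constant; for `W` it is `!![x₁, x₀; x₀, 0]`,
with determinant `-x₀²`. So both linear forms are multiples of `x₀`, i.e. `a₁ = a'₁ = 0`, and the
slice along `e₁` of the sum vanishes, whereas that of `W` is `e₀ e₀ᵀ ≠ 0`.
-/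

open Matrix

section Slices

variable {R : Type*} [CommRing R] {m n p : Type*} [Fintype m]

def sliceAlong (x : m → R) : (m → R) ⊗[R] ((n → R) ⊗[R] (p → R)) →ₗ[R] Matrix n p R :=
  TensorProduct.lift ((dotProductBilin R R x).smulRight (TensorProduct.lift (vecMulVecBilin R R)))

@[simp]
theorem sliceAlong_tmul (x a : m → R) (b : n → R) (c : p → R) :
    sliceAlong x (a ⊗ₜ[R] (b ⊗ₜ[R] c)) = (x ⬝ᵥ a) • vecMulVec b c := by
  simp [sliceAlong]

theorem det_smul_vecMulVec_add_smul_vecMulVec (s s' : R) (b c b' c' : Fin 2 → R) :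
    det (s • vecMulVec b c + s' • vecMulVec b' c') =
      s * s' * det (of ![b, b']) * det (of ![c, c']) := by
  simp only [det_fin_two, Matrix.add_apply, Matrix.smul_apply, vecMulVec_apply, of_apply,
    smul_eq_mul, cons_val_zero, cons_val_one]
  ring

theorem det_sliceAlong_add_tmul (x a a' : m → R) (b c b' c' : Fin 2 → R) :
    det (sliceAlong x (a ⊗ₜ[R] (b ⊗ₜ[R] c) + a' ⊗ₜ[R] (b' ⊗ₜ[R] c'))) =
      (x ⬝ᵥ a) * (x ⬝ᵥ a') * det (of ![b, b']) * det (of ![c, c']) := by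
  rw [map_add, sliceAlong_tmul, sliceAlong_tmul, det_smul_vecMulVec_add_smul_vecMulVec]

end Slices

theorem coord_one_eq_zero_of_forall_dotProduct_mul_eq {R : Type*} [CommRing R] [IsDomain R]
    {a a' : Fin 2 → R} {p c : R} (hc : c ≠ 0)
    (h : ∀ x : Fin 2 → R, (x ⬝ᵥ a) * (x ⬝ᵥ a') * p = c * x 0 ^ 2) : a 1 = 0 ∧ a' 1 = 0 := by
  have h₀ := h ![1, 0]
  have h₁ := h ![0, 1]
  have h₂ := h ![1, 1]
  simp only [dotProduct, Fin.sum_univ_two, cons_val_zero, cons_val_one] at h₀ h₁ h₂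
  have hp : p ≠ 0 := by
    rintro rfl
    exact hc (by linear_combination -h₀)
  have hsq : a 1 * a' 1 = 0 := (mul_eq_zero.1 (by linear_combination h₁)).resolve_right hp
  have hmixed : (a 0 * a' 1 + a 1 * a' 0) * p = 0 := by linear_combination h₂ - h₀ - h₁
  rcases mul_eq_zero.1 hsq with ha | ha'
  · refine ⟨ha, (mul_eq_zero.1 (?_ : a 0 * p * a' 1 = 0)).resolve_left fun h0 => hc ?_⟩
    · linear_combination hmixed - a' 0 * p * ha
    · linear_combination a' 0 * h0 - h₀
  · refine ⟨(mul_eq_zero.1 (?_ : a' 0 * p * a 1 = 0)).resolve_left fun h0 => hc ?_, ha'⟩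
    · linear_combination hmixed - a 0 * p * ha'
    · linear_combination a 0 * h0 - h₀

theorem sliceAlong_W (x : Qubit) : sliceAlong x W = !![x 1, x 0; x 0, 0] := by
  ext j k
  fin_cases j <;> fin_cases k <;> simp [W, e0, e1, dotProduct]

/-- The W state has tensor rank 3: it is not a sum of two rank-one tensors. -/
theorem W_not_sum_of_two_rank_one :
    ¬ ∃ a b c a' b' c' : Qubit, W = a ⊗ₜ[ℂ] (b ⊗ₜ[ℂ] c) + a' ⊗ₜ[ℂ] (b' ⊗ₜ[ℂ] c') := by
  rintro ⟨a, b, c, a', b', c', hW⟩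
  have hdet (x : Qubit) :
      (x ⬝ᵥ a) * (x ⬝ᵥ a') * (det (of ![b, b']) * det (of ![c, c'])) = -1 * x 0 ^ 2 := by
    rw [← mul_assoc, ← det_sliceAlong_add_tmul, ← hW, sliceAlong_W, det_fin_two_of]
    ring
  obtain ⟨ha, ha'⟩ := coord_one_eq_zero_of_forall_dotProduct_mul_eq (by norm_num) hdet
  have h00 := congrFun (congrFun (congrArg (sliceAlong e1) hW) 0) 0
  simp [sliceAlong_W, e1, dotProduct, ha, ha'] at h00

end
end

section
/- The SLOCC orbit of GHZ is dense in the three-qubit Hilbert space: the closure (in the unique Hausdorff vector-space topology on the finite-dimensional space ℂ² ⊗ ℂ² ⊗ ℂ²) of the set of tensors SLOCC-equivalent to GHZ = e₀⊗e₀⊗e₀ + e₁⊗e₁⊗e₁ is all of ℂ² ⊗ ℂ² ⊗ ℂ². (The secant variety of the Segre variety ℙ¹×ℙ¹×ℙ¹ fills the ambient space ℙ⁷.) -/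
open TensorProduct

noncomputable section

/-- The standard basis e_i ⊗ e_j ⊗ e_k of the three-qubit space. -/
def stdBasis : Module.Basis (Fin 2 × Fin 2 × Fin 2) ℂ ThreeQubit :=
  (Pi.basisFun ℂ (Fin 2)).tensorProduct
    ((Pi.basisFun ℂ (Fin 2)).tensorProduct (Pi.basisFun ℂ (Fin 2)))

/-- The standard (unique Hausdorff vector-space) topology on the finite-dimensional space
ℂ²⊗ℂ²⊗ℂ², induced from the coordinate norm. -/
instance : NormedAddCommGroup ThreeQubit :=
  NormedAddCommGroup.induced ThreeQubit (Fin 2 × Fin 2 × Fin 2 → ℂ)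
    stdBasis.equivFun.toLinearMap stdBasis.equivFun.injective

instance : NormedSpace ℂ ThreeQubit :=
  NormedSpace.induced ℂ ThreeQubit (Fin 2 × Fin 2 × Fin 2 → ℂ) stdBasis.equivFun.toLinearMap

/-!
Write a three-qubit tensor as `e₀ ⊗ A + e₁ ⊗ B` with `2 × 2` slices `A`, `B`. If `det B ≠ 0`
and the quadratic `λ ↦ det (A - λ B)` has two distinct roots `λ₁, λ₂` (its discriminant is
Cayley's hyperdeterminant), then `A - λᵢ B = uᵢ vᵢᵀ` have rank one and, up to the factor
`λ₂ - λ₁`, the tensor equals `(λ₂ e₀ + e₁) ⊗ u₁ ⊗ v₁ - (λ₁ e₀ + e₁) ⊗ u₂ ⊗ v₂`. Each pair of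
factors is independent (for the `u`'s and `v`'s because `B` has full rank), so the tensor is
SLOCC-equivalent to GHZ.

The orbit is a cone. Fix `η` with `det B_η ≠ 0` and nonzero discriminant; for any `ψ` both
quantities are polynomial in `s` for `η + s ψ` and nonzero at `s = 0`, so
`ψ + t η = t (η + t⁻¹ ψ)` lies in the orbit for all but finitely many `t`.
-/

open Matrix Polynomial

section Pencil

variable {R : Type*} [CommRing R]

def mixedDet (A B : Matrix (Fin 2) (Fin 2) R) : R := (A + B).det - A.det - B.det

def pencilDiscrim (A B : Matrix (Fin 2) (Fin 2) R) : R := discrim B.det (-mixedDet A B) A.det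

lemma det_sub_smul (A B : Matrix (Fin 2) (Fin 2) R) (l : R) :
    (A - l • B).det = B.det * (l * l) + -mixedDet A B * l + A.det := by
  simp only [mixedDet, det_fin_two, Matrix.sub_apply, Matrix.add_apply, Matrix.smul_apply,
    smul_eq_mul]
  ring

lemma RingHom.map_pencilDiscrim {S : Type*} [CommRing S] (f : R →+* S)
    (A B : Matrix (Fin 2) (Fin 2) R) :
    f (pencilDiscrim A B) = pencilDiscrim (f.mapMatrix A) (f.mapMatrix B) := by
  simp [pencilDiscrim, mixedDet, discrim, RingHom.map_det, Matrix.map_add, map_ofNat]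

lemma exists_polynomial_eval_eq (A₀ B₀ A B : Matrix (Fin 2) (Fin 2) R) :
    ∃ P : R[X], ∀ s, P.eval s = (B₀ + s • B).det * pencilDiscrim (A₀ + s • A) (B₀ + s • B) := by
  refine ⟨(B₀.map C + (X : R[X]) • B.map C).det *
    pencilDiscrim (A₀.map C + (X : R[X]) • A.map C) (B₀.map C + (X : R[X]) • B.map C),
    fun s => ?_⟩
  have hline (M₀ M : Matrix (Fin 2) (Fin 2) R) :
      (evalRingHom s).mapMatrix (M₀.map C + (X : R[X]) • M.map C) = M₀ + s • M := by
    ext; simp; ring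
  rw [← coe_evalRingHom s, map_mul, RingHom.map_det, RingHom.map_pencilDiscrim, hline, hline]

lemma det_vecMulVec_sub_vecMulVec (u₁ v₁ u₂ v₂ : Fin 2 → R) :
    (vecMulVec u₁ v₁ - vecMulVec u₂ v₂).det = -((of ![u₁, u₂]).det * (of ![v₁, v₂]).det) := by
  simp only [det_fin_two, Matrix.sub_apply, vecMulVec_apply, of_apply, cons_val_zero,
    cons_val_one]
  ring

end Pencil

section Field

variable {K : Type*} [Field K]

lemma exists_eq_vecMulVec_of_det_eq_zero {M : Matrix (Fin 2) (Fin 2) K} (h : M.det = 0) :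
    ∃ u v : Fin 2 → K, M = vecMulVec u v := by
  rw [det_fin_two] at h
  by_cases h00 : M 0 0 = 0
  · rcases mul_eq_zero.mp (show M 0 1 * M 1 0 = 0 by linear_combination -h + M 1 1 * h00)
      with h01 | h10
    · refine ⟨![0, 1], M 1, ?_⟩
      ext i j; fin_cases i <;> fin_cases j <;> simp [vecMulVec_apply, h00, h01]
    · refine ⟨fun i => M i 1, ![0, 1], ?_⟩
      ext i j; fin_cases i <;> fin_cases j <;> simp [vecMulVec_apply, h00, h10]
  · refine ⟨fun i => M i 0, ![1, M 0 1 / M 0 0], ?_⟩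
    ext i j; fin_cases i <;> fin_cases j <;> simp [vecMulVec_apply]
    · field_simp
    · field_simp; linear_combination h

lemma exists_ne_det_sub_smul_eq_zero [IsAlgClosed K] [NeZero (2 : K)]
    {A B : Matrix (Fin 2) (Fin 2) K} (hB : B.det ≠ 0) (hd : pencilDiscrim A B ≠ 0) :
    ∃ l₁ l₂ : K, l₁ ≠ l₂ ∧ (A - l₁ • B).det = 0 ∧ (A - l₂ • B).det = 0 := by
  obtain ⟨σ, hσ⟩ := IsAlgClosed.exists_eq_mul_self (pencilDiscrim A B)
  have hσ0 : σ ≠ 0 := by rintro rfl; exact hd (by simpa using hσ)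
  have hroots := quadratic_eq_zero_iff hB hσ
  refine ⟨_, _, ?_, by rw [det_sub_smul, hroots]; left; rfl,
    by rw [det_sub_smul, hroots]; right; rfl⟩
  rw [Ne, div_left_inj' (mul_ne_zero two_ne_zero hB)]
  intro h
  have h2σ : 2 * σ = 0 := by linear_combination h
  exact hσ0 ((mul_eq_zero.mp h2σ).resolve_left two_ne_zero)

end Field

lemma dense_of_exists_polynomial {E : Type*} [AddCommGroup E] [Module ℂ E] [TopologicalSpace E]
    [ContinuousAdd E] [ContinuousSMul ℂ E] {S : Set E}
    (hS : ∀ c : ℂ, c ≠ 0 → ∀ x ∈ S, c • x ∈ S)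
    (h : ∀ ψ : E, ∃ (η : E) (P : ℂ[X]), P ≠ 0 ∧ ∀ s, P.eval s ≠ 0 → η + s • ψ ∈ S) :
    Dense S := by
  intro ψ
  obtain ⟨η, P, hP, hPS⟩ := h ψ
  let F : Set ℂ := (·⁻¹) '' {s | P.IsRoot s} ∪ {0}
  have hF : F.Finite := ((P.finite_setOfPred_isRoot hP).image _).union (Set.finite_singleton 0)
  have hmaps : Set.MapsTo (fun t : ℂ => ψ + t • η) (Set.univ \ F) S := by
    rintro t ⟨-, ht⟩
    simp only [F, Set.mem_union, Set.mem_image, Set.mem_singleton_iff, not_or] at ht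
    obtain ⟨hroot, ht0⟩ := ht
    have : η + t⁻¹ • ψ ∈ S := hPS _ fun h => hroot ⟨t⁻¹, h, inv_inv t⟩
    convert hS t ht0 _ this using 1
    rw [smul_add, smul_smul, mul_inv_cancel₀ ht0, one_smul, add_comm]
  simpa using map_mem_closure (by fun_prop) ((dense_univ.sdiff_finite hF) 0) hmaps

lemma Qubit.eq_smul_e0_add_smul_e1 (u : Qubit) : u = u 0 • e0 + u 1 • e1 := by
  ext i; fin_cases i <;> simp [e0, e1]

lemma exists_linearEquiv_eq_e0_e1 {x y : Qubit} (h : (of ![x, y]).det ≠ 0) :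
    ∃ f : Qubit ≃ₗ[ℂ] Qubit, f x = e0 ∧ f y = e1 := by
  let b := basisOfLinearIndependentOfCardEqFinrank (linearIndependent_rows_of_det_ne_zero h)
    (by simp)
  have hb (i j : Fin 2) : b.equivFun (![x, y] i) j = if i = j then 1 else 0 := by
    have := b.equivFun_self i j
    rwa [coe_basisOfLinearIndependentOfCardEqFinrank] at this
  refine ⟨b.equivFun, ?_, ?_⟩ <;> ext j <;> fin_cases j
  all_goals first | exact hb 0 _ | exact hb 1 _

lemma slocc_smul {ψ φ : ThreeQubit} (h : SLOCC ψ φ) {c : ℂ} (hc : c ≠ 0) :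
    SLOCC (c • ψ) φ := by
  obtain ⟨g₁, g₂, g₃, rfl⟩ := h
  refine ⟨(LinearEquiv.smulOfNeZero ℂ Qubit c⁻¹ (inv_ne_zero hc)).trans g₁, g₂, g₃, ?_⟩
  have : ((LinearEquiv.smulOfNeZero ℂ Qubit c⁻¹ (inv_ne_zero hc)).trans g₁ : Qubit →ₗ[ℂ] Qubit)
      = c⁻¹ • (g₁ : Qubit →ₗ[ℂ] Qubit) := by ext; simp
  rw [this, TensorProduct.map_smul_left, LinearMap.smul_apply, map_smul, smul_smul,
    inv_mul_cancel₀ hc, one_smul]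

lemma slocc_tmul_add_tmul_GHZ {a a' b b' c c' : Qubit} (ha : (of ![a, a']).det ≠ 0)
    (hb : (of ![b, b']).det ≠ 0) (hc : (of ![c, c']).det ≠ 0) :
    SLOCC (a ⊗ₜ[ℂ] (b ⊗ₜ[ℂ] c) + a' ⊗ₜ[ℂ] (b' ⊗ₜ[ℂ] c')) GHZ := by
  obtain ⟨f₁, hf₁, hf₁'⟩ := exists_linearEquiv_eq_e0_e1 ha
  obtain ⟨f₂, hf₂, hf₂'⟩ := exists_linearEquiv_eq_e0_e1 hb
  obtain ⟨f₃, hf₃, hf₃'⟩ := exists_linearEquiv_eq_e0_e1 hc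
  exact ⟨f₁, f₂, f₃, by simp [hf₁, hf₁', hf₂, hf₂', hf₃, hf₃', GHZ]⟩

def pairTensor : Matrix (Fin 2) (Fin 2) ℂ →ₗ[ℂ] Qubit ⊗[ℂ] Qubit where
  toFun M := M 0 0 • e0 ⊗ₜ e0 + M 0 1 • e0 ⊗ₜ e1 + M 1 0 • e1 ⊗ₜ e0 + M 1 1 • e1 ⊗ₜ e1
  map_add' M N := by simp only [Matrix.add_apply, add_smul]; abel
  map_smul' c M := by
    simp only [Matrix.smul_apply, smul_eq_mul, mul_smul, smul_add, RingHom.id_apply]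

lemma pairTensor_vecMulVec (u v : Qubit) : pairTensor (vecMulVec u v) = u ⊗ₜ v := by
  conv_rhs => rw [u.eq_smul_e0_add_smul_e1, v.eq_smul_e0_add_smul_e1]
  simp only [pairTensor, LinearMap.coe_mk, AddHom.coe_mk, vecMulVec_apply, add_tmul, tmul_add,
    ← smul_tmul', tmul_smul]
  module

lemma pairTensor_surjective : Function.Surjective pairTensor := by
  intro φ
  induction φ using TensorProduct.induction_on with
  | zero => exact ⟨0, map_zero _⟩
  | tmul u v => exact ⟨vecMulVec u v, pairTensor_vecMulVec u v⟩
  | add φ₁ φ₂ h₁ h₂ =>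
    obtain ⟨M₁, rfl⟩ := h₁
    obtain ⟨M₂, rfl⟩ := h₂
    exact ⟨M₁ + M₂, map_add _ _ _⟩

def ofSlices : Matrix (Fin 2) (Fin 2) ℂ × Matrix (Fin 2) (Fin 2) ℂ →ₗ[ℂ] ThreeQubit :=
  (TensorProduct.mk ℂ Qubit _ e0 ∘ₗ pairTensor).coprod
    (TensorProduct.mk ℂ Qubit _ e1 ∘ₗ pairTensor)

lemma ofSlices_apply (A B : Matrix (Fin 2) (Fin 2) ℂ) :
    ofSlices (A, B) = e0 ⊗ₜ pairTensor A + e1 ⊗ₜ pairTensor B := rfl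

lemma ofSlices_surjective : Function.Surjective ofSlices := by
  intro ψ
  induction ψ using TensorProduct.induction_on with
  | zero => exact ⟨0, map_zero _⟩
  | tmul x φ =>
    obtain ⟨M, rfl⟩ := pairTensor_surjective φ
    refine ⟨(x 0 • M, x 1 • M), ?_⟩
    conv_rhs => rw [x.eq_smul_e0_add_smul_e1]
    rw [ofSlices_apply, map_smul, map_smul, add_tmul, smul_tmul, smul_tmul]
  | add ψ₁ ψ₂ h₁ h₂ =>
    obtain ⟨M₁, rfl⟩ := h₁
    obtain ⟨M₂, rfl⟩ := h₂
    exact ⟨M₁ + M₂, map_add _ _ _⟩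

lemma slocc_ofSlices_GHZ {A B : Matrix (Fin 2) (Fin 2) ℂ} (hB : B.det ≠ 0)
    (hd : pencilDiscrim A B ≠ 0) : SLOCC (ofSlices (A, B)) GHZ := by
  obtain ⟨l₁, l₂, hl, h₁, h₂⟩ := exists_ne_det_sub_smul_eq_zero hB hd
  obtain ⟨u₁, v₁, hM₁⟩ := exists_eq_vecMulVec_of_det_eq_zero h₁
  obtain ⟨u₂, v₂, hM₂⟩ := exists_eq_vecMulVec_of_det_eq_zero h₂
  have hl' : l₂ - l₁ ≠ 0 := sub_ne_zero.mpr hl.symm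
  have hUV : (of ![u₁, u₂]).det * (of ![v₁, v₂]).det ≠ 0 := by
    have hB' : (l₂ - l₁) • B = vecMulVec u₁ v₁ - vecMulVec u₂ v₂ := by
      rw [← hM₁, ← hM₂]; module
    intro h
    have := congrArg Matrix.det hB'
    rw [det_smul, det_vecMulVec_sub_vecMulVec, h, neg_zero] at this
    exact mul_ne_zero (pow_ne_zero _ hl') hB this
  have hW : (of ![l₂ • e0 + e1, -(l₁ • e0 + e1)]).det ≠ 0 := by
    simpa [det_fin_two, e0, e1, neg_add_eq_zero, eq_comm] using hl
  have hsum : (l₂ - l₁) • ofSlices (A, B) = (l₂ • e0 + e1) ⊗ₜ (u₁ ⊗ₜ v₁)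
      + (-(l₁ • e0 + e1)) ⊗ₜ (u₂ ⊗ₜ v₂) := by
    rw [← pairTensor_vecMulVec, ← pairTensor_vecMulVec, ← hM₁, ← hM₂, map_sub, map_sub,
      map_smul, map_smul, ofSlices_apply]
    simp only [add_tmul, neg_tmul, tmul_sub, tmul_smul, ← smul_tmul', smul_add]
    module
  have := slocc_smul (slocc_tmul_add_tmul_GHZ hW (left_ne_zero_of_mul hUV)
    (right_ne_zero_of_mul hUV)) (inv_ne_zero hl')
  rwa [← hsum, smul_smul, inv_mul_cancel₀ hl', one_smul] at this

/-- The GHZ SLOCC orbit is dense in the three-qubit Hilbert space: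
the secant variety of the Segre variety fills the ambient space. -/
theorem GHZ_orbit_dense :
    Dense {ψ : ThreeQubit | SLOCC ψ GHZ} := by
  refine dense_of_exists_polynomial (fun c hc ψ hψ => slocc_smul hψ hc) fun ψ => ?_
  obtain ⟨⟨A, B⟩, rfl⟩ := ofSlices_surjective ψ
  obtain ⟨P, hP⟩ := exists_polynomial_eval_eq !![1, 0; 0, -1] 1 A B
  refine ⟨ofSlices (!![1, 0; 0, -1], 1), P, fun h => ?_, fun s hs => ?_⟩
  · -- the slices of `η` have determinant `1` and discriminant `4`
    have := hP 0
    simp [h, pencilDiscrim, mixedDet, discrim, det_fin_two] at this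
  · rw [hP] at hs
    rw [← map_smul, ← map_add]
    exact slocc_ofSlices_GHZ (left_ne_zero_of_mul hs) (right_ne_zero_of_mul hs)

end
end

section
/- For each t ∈ ℂ with t ≠ 0, set ψ_t = t⁻¹ · ((e₀ + t e₁)⊗(e₀ + t e₁)⊗(e₀ + t e₁) − e₀⊗e₀⊗e₀) ∈ ℂ² ⊗ ℂ² ⊗ ℂ². Then every ψ_t is SLOCC-equivalent to GHZ = e₀⊗e₀⊗e₀ + e₁⊗e₁⊗e₁, and ψ_t converges to W = e₁⊗e₀⊗e₀ + e₀⊗e₁⊗e₀ + e₀⊗e₀⊗e₁ as t → 0. (The W state is a limit of GHZ-class states: the tangential variety lies in the closure of the secant variety.) -/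
/-! The state ψ_t is the difference quotient at `0` of the curve `t ↦ v_t ⊗ v_t ⊗ v_t` of product
states, `v_t = e₀ + t e₁`, so it tends to the velocity of that curve, which is `W`. For `t ≠ 0`,
`ψ_t = (t⁻¹ v_t) ⊗ v_t ⊗ v_t + (-t⁻¹ e₀) ⊗ e₀ ⊗ e₀` is a sum of two product states whose factors
are linearly independent in each slot; the local maps sending each such pair to `(e₀, e₁)` carry
it to GHZ. -/

open TensorProduct

noncomputable section

theorem tmul_cube_add_smul {R M : Type*} [CommSemiring R] [AddCommMonoid M] [Module R M]
    (a b : M) (t : R) :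
    (a + t • b) ⊗ₜ[R] ((a + t • b) ⊗ₜ[R] (a + t • b)) =
      a ⊗ₜ (a ⊗ₜ a) + t • (b ⊗ₜ (a ⊗ₜ a) + a ⊗ₜ (b ⊗ₜ a) + a ⊗ₜ (a ⊗ₜ b)) +
        t ^ 2 • (b ⊗ₜ (b ⊗ₜ a) + b ⊗ₜ (a ⊗ₜ b) + a ⊗ₜ (b ⊗ₜ b)) + t ^ 3 • b ⊗ₜ (b ⊗ₜ b) := by
  simp only [tmul_add, add_tmul, tmul_smul, ← smul_tmul', smul_add, smul_smul]
  module

theorem hasDerivAt_cubic_zero {𝕜 E : Type*} [NontriviallyNormedField 𝕜] [NormedAddCommGroup E]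
    [NormedSpace 𝕜 E] (c w x y : E) :
    HasDerivAt (fun t : 𝕜 ↦ c + t • w + t ^ 2 • x + t ^ 3 • y) w 0 := by
  have h := ((((hasDerivAt_const (0 : 𝕜) c).add ((hasDerivAt_id 0).smul_const w)).add
    ((hasDerivAt_pow 2 0).smul_const x)).add ((hasDerivAt_pow 3 0).smul_const y))
  exact h.congr_deriv (by simp)

theorem hasDerivAt_tmul_cube_e0_add_smul_e1 :
    HasDerivAt (fun t : ℂ ↦ (e0 + t • e1) ⊗ₜ[ℂ] ((e0 + t • e1) ⊗ₜ[ℂ] (e0 + t • e1))) W 0 := by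
  simp_rw [tmul_cube_add_smul]
  exact hasDerivAt_cubic_zero _ _ _ _

theorem e0_eq_single : e0 = Pi.single 0 1 := by
  ext i; fin_cases i <;> rfl

theorem e1_eq_single : e1 = Pi.single 1 1 := by
  ext i; fin_cases i <;> rfl

theorem linearIndependent_e0_e1 : LinearIndependent ℂ ![e0, e1] := by
  convert (Pi.basisFun ℂ (Fin 2)).linearIndependent
  ext i : 1; fin_cases i <;> simp [e0_eq_single, e1_eq_single]

theorem linearIndependent_e0_add_smul_e1_e0 {t : ℂ} (ht : t ≠ 0) :
    LinearIndependent ℂ ![e0 + t • e1, e0] := by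
  have := (LinearIndependent.pair_add_smul_add_smul_iff (x := e0) (y := e1) (1 : ℂ) t 1 0).2
    ⟨linearIndependent_e0_e1, by simpa [eq_comm] using ht⟩
  simpa using this

theorem exists_linearEquiv_pi_of_linearIndependent_pair {K V : Type*} [Field K] [AddCommGroup V]
    [Module K V] (hV : Module.finrank K V = 2) {u v : V} (h : LinearIndependent K ![u, v]) :
    ∃ g : V ≃ₗ[K] (Fin 2 → K), g u = Pi.single 0 1 ∧ g v = Pi.single 1 1 := by
  let b := basisOfLinearIndependentOfCardEqFinrank h (by simp [hV])
  have hb (i : Fin 2) : b.equivFun (b i) = Pi.single i 1 := by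
    ext j; simp [b.equivFun_self, Pi.single_apply, eq_comm]
  have hbu : b = ![u, v] := coe_basisOfLinearIndependentOfCardEqFinrank h _
  exact ⟨b.equivFun, by simpa [hbu] using hb 0, by simpa [hbu] using hb 1⟩

theorem slocc_GHZ_of_linearIndependent {u₁ v₁ u₂ v₂ u₃ v₃ : Qubit}
    (h₁ : LinearIndependent ℂ ![u₁, v₁]) (h₂ : LinearIndependent ℂ ![u₂, v₂])
    (h₃ : LinearIndependent ℂ ![u₃, v₃]) :
    SLOCC (u₁ ⊗ₜ[ℂ] (u₂ ⊗ₜ[ℂ] u₃) + v₁ ⊗ₜ[ℂ] (v₂ ⊗ₜ[ℂ] v₃)) GHZ := by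
  have hQubit : Module.finrank ℂ Qubit = 2 := by simp
  obtain ⟨g₁, hu₁, hv₁⟩ := exists_linearEquiv_pi_of_linearIndependent_pair hQubit h₁
  obtain ⟨g₂, hu₂, hv₂⟩ := exists_linearEquiv_pi_of_linearIndependent_pair hQubit h₂
  obtain ⟨g₃, hu₃, hv₃⟩ := exists_linearEquiv_pi_of_linearIndependent_pair hQubit h₃
  refine ⟨g₁, g₂, g₃, ?_⟩
  simp [GHZ, e0_eq_single, e1_eq_single, hu₁, hv₁, hu₂, hv₂, hu₃, hv₃]

open Filter in
/-- W is a limit of GHZ-class states: for t ≠ 0 the state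
ψ_t = t⁻¹·((e₀+t e₁)⊗(e₀+t e₁)⊗(e₀+t e₁) − e₀⊗e₀⊗e₀) is in the GHZ class,
and ψ_t → W as t → 0. -/
theorem W_limit_of_GHZ_states :
    (∀ t : ℂ, t ≠ 0 →
      SLOCC (t⁻¹ • ((e0 + t • e1) ⊗ₜ[ℂ] ((e0 + t • e1) ⊗ₜ[ℂ] (e0 + t • e1))
        - e0 ⊗ₜ[ℂ] (e0 ⊗ₜ[ℂ] e0))) GHZ) ∧
    Tendsto (fun t : ℂ =>
        t⁻¹ • ((e0 + t • e1) ⊗ₜ[ℂ] ((e0 + t • e1) ⊗ₜ[ℂ] (e0 + t • e1))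
          - e0 ⊗ₜ[ℂ] (e0 ⊗ₜ[ℂ] e0)))
      (nhdsWithin 0 {0}ᶜ) (nhds W) := by
  refine ⟨fun t ht ↦ ?_, ?_⟩
  · set v := e0 + t • e1
    have hv : LinearIndependent ℂ ![v, e0] := linearIndependent_e0_add_smul_e1_e0 ht
    have hψ : t⁻¹ • (v ⊗ₜ[ℂ] (v ⊗ₜ[ℂ] v) - e0 ⊗ₜ[ℂ] (e0 ⊗ₜ[ℂ] e0)) =
        (t⁻¹ • v) ⊗ₜ[ℂ] (v ⊗ₜ[ℂ] v) + (-t⁻¹ • e0) ⊗ₜ[ℂ] (e0 ⊗ₜ[ℂ] e0) := by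
      rw [smul_sub, sub_eq_add_neg, smul_tmul', smul_tmul', ← neg_tmul, neg_smul]
    rw [hψ]
    refine slocc_GHZ_of_linearIndependent ?_ hv hv
    rwa [LinearIndependent.pair_smul_smul_iff (by simpa) (by simpa)]
  · simpa using hasDerivAt_iff_tendsto_slope_zero.1 hasDerivAt_tmul_cube_e0_add_smul_e1

end
end

section
/- Every nonzero homogeneous cubic polynomial in two variables over ℂ is GL₂(ℂ)-equivalent (by linear substitution of the variables) to exactly one of the three normal forms x³, x²y, and x³ + y³. In particular the nonzero states of three bosonic qubits (Sym³ℂ² under SL₂(ℂ)) form exactly three SLOCC classes: separable (cube of a linear form, the twisted cubic v₃(ℙ¹)), W-type (x²y, the tangential variety) and GHZ-type (x³ + y³, cubics with three distinct roots). -/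
/-!
After a substitution making the coefficient of `x³` nonzero, a nonzero binary cubic over `ℂ`
factors as `a (x - r₁ y)(x - r₂ y)(x - r₃ y)`. If all roots coincide, an explicit substitution
takes it to `x³`; if exactly two do, to `x²y`; if they are distinct, to `xy(x + y)`, which is
equivalent to `x³ + y³` through a primitive cube root of unity.

The normal forms are separated by invariants of the coefficients: a substitution by `g`
multiplies the discriminant by `(det g)⁶`, and it vanishes for `x³` and `x²y` but not for
`x³ + y³`; the Hessian transforms covariantly, and it vanishes identically for `x³` but not for
`x²y`.
-/

open MvPolynomial

noncomputable section

/-- Linear substitution of variables: the matrix g sends the polynomial f(x,y) to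
f(g₁₁x + g₂₁y, g₁₂x + g₂₂y), i.e. the variable Xᵢ is replaced by ∑ⱼ gⱼᵢ Xⱼ. -/
def subst (g : Matrix (Fin 2) (Fin 2) ℂ) :
    MvPolynomial (Fin 2) ℂ →ₐ[ℂ] MvPolynomial (Fin 2) ℂ :=
  aeval (fun i => ∑ j, C (g j i) * X j)

/-- Two binary forms are GL₂(ℂ)-equivalent if one is obtained from the other by an
invertible linear substitution of the variables. -/
def CubicEquiv (f h : MvPolynomial (Fin 2) ℂ) : Prop :=
  ∃ g : GL (Fin 2) ℂ, subst (g : Matrix (Fin 2) (Fin 2) ℂ) f = h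

namespace Cubic

variable {R : Type*} [CommRing R]

lemma homogenize_toPoly (P : Cubic R) :
    P.toPoly.homogenize 3 =
      C P.a * X 0 ^ 3 + C P.b * (X 0 ^ 2 * X 1) + C P.c * (X 0 * X 1 ^ 2) + C P.d * X 1 ^ 3 := by
  simp [toPoly, Polynomial.homogenize_X_pow]

lemma homogenize_toPoly_injective :
    Function.Injective fun P : Cubic R => P.toPoly.homogenize 3 := by
  intro P Q h
  have dehomogenize (P : Cubic R) :
      aeval ![Polynomial.X, 1] (P.toPoly.homogenize 3) = P.toPoly :=
    Polynomial.aeval_homogenize_X_one _ Polynomial.natDegree_cubic_le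
  rw [← toPoly_injective, ← dehomogenize P, ← dehomogenize Q]
  exact congrArg _ h

lemma exists_homogenize_toPoly_eq {f : MvPolynomial (Fin 2) R} (hf : f.IsHomogeneous 3) :
    ∃ P : Cubic R, P.toPoly.homogenize 3 = f := by
  set p : Polynomial R := aeval ![Polynomial.X, 1] f
  have hp : p.degree ≤ 3 := by
    refine Polynomial.degree_le_of_natDegree_le ?_
    simpa using aeval_natDegree_le f hf.totalDegree_le _ (n := 1) fun i => by
      fin_cases i <;> simp [Polynomial.natDegree_X_le]
  have hP : (Cubic.equiv.symm ⟨p, hp⟩).toPoly = p :=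
    congrArg Subtype.val (Cubic.equiv.apply_symm_apply ⟨p, hp⟩)
  exact ⟨_, by rw [hP]; exact Polynomial.homogenize_eq_of_isHomogeneous hf rfl⟩

lemma exists_homogenize_toPoly_eq_mul {K : Type*} [Field K] [IsAlgClosed K] {P : Cubic K}
    (ha : P.a ≠ 0) : ∃ x y z : K, P.toPoly.homogenize 3 =
      C P.a * (X 0 - C x * X 1) * (X 0 - C y * X 1) * (X 0 - C z * X 1) := by
  obtain ⟨x, y, z, h3⟩ :=
    (splits_iff_roots_eq_three (φ := RingHom.id K) ha).mp (IsAlgClosed.splits _)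
  have hP : P = ⟨P.a, P.a * -(x + y + z), P.a * (x * y + x * z + y * z), P.a * -(x * y * z)⟩ :=
    eq_sum_three_roots ha h3
  refine ⟨x, y, z, ?_⟩
  rw [hP, homogenize_toPoly]
  simp only [map_mul, map_neg, map_add]
  ring

/-- The coefficients of `f (p x + r y, q x + s y)` for `f = a x³ + b x²y + c xy² + d y³`. -/
def linearSubst (P : Cubic R) (p q r s : R) : Cubic R where
  a := P.a * p ^ 3 + P.b * p ^ 2 * q + P.c * p * q ^ 2 + P.d * q ^ 3
  b := 3 * P.a * p ^ 2 * r + P.b * (p ^ 2 * s + 2 * p * q * r) + P.c * (q ^ 2 * r + 2 * p * q * s)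
    + 3 * P.d * q ^ 2 * s
  c := 3 * P.a * p * r ^ 2 + P.b * (2 * p * r * s + q * r ^ 2) + P.c * (p * s ^ 2 + 2 * q * r * s)
    + 3 * P.d * q * s ^ 2
  d := P.a * r ^ 3 + P.b * r ^ 2 * s + P.c * r * s ^ 2 + P.d * s ^ 3

lemma linearSubst_a (P : Cubic R) (v : Fin 2 → R) (r s : R) :
    (P.linearSubst (v 0) (v 1) r s).a = eval v (P.toPoly.homogenize 3) := by
  simp only [linearSubst, homogenize_toPoly, map_add, map_mul, map_pow, eval_C, eval_X]
  ring

lemma discr_linearSubst (P : Cubic R) (p q r s : R) :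
    (P.linearSubst p q r s).discr = (p * s - q * r) ^ 6 * P.discr := by
  simp only [discr, linearSubst]
  ring

/-- The Hessian `f_xx f_yy - f_xy²` of `f = a x³ + b x²y + c xy² + d y³` is
`4 ((3ac - b²) x² + (9ad - bc) xy + (3bd - c²) y²)`. -/
def HessianVanishes (P : Cubic R) : Prop :=
  3 * P.a * P.c - P.b ^ 2 = 0 ∧ 9 * P.a * P.d - P.b * P.c = 0 ∧ 3 * P.b * P.d - P.c ^ 2 = 0

lemma HessianVanishes.linearSubst {P : Cubic R} (h : P.HessianVanishes) (p q r s : R) :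
    (P.linearSubst p q r s).HessianVanishes := by
  obtain ⟨h₁, h₂, h₃⟩ := h
  refine ⟨?_, ?_, ?_⟩ <;> simp only [Cubic.linearSubst]
  · linear_combination (p * s - q * r) ^ 2 * (p ^ 2 * h₁ + p * q * h₂ + q ^ 2 * h₃)
  · linear_combination
      (p * s - q * r) ^ 2 * (2 * p * r * h₁ + (p * s + q * r) * h₂ + 2 * q * s * h₃)
  · linear_combination (p * s - q * r) ^ 2 * (r ^ 2 * h₁ + r * s * h₂ + s ^ 2 * h₃)

end Cubic

lemma subst_mul (g h : Matrix (Fin 2) (Fin 2) ℂ) (f : MvPolynomial (Fin 2) ℂ) :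
    subst h (subst g f) = subst (h * g) f := by
  suffices (subst h).comp (subst g) = subst (h * g) from DFunLike.congr_fun this f
  refine MvPolynomial.algHom_ext fun i => ?_
  simp only [AlgHom.comp_apply, subst, aeval_X, map_mul, aeval_C, algebraMap_eq,
    Fin.sum_univ_two, Matrix.mul_apply, map_add]
  ring

lemma subst_one (f : MvPolynomial (Fin 2) ℂ) : subst 1 f = f := by
  suffices subst 1 = AlgHom.id ℂ _ from DFunLike.congr_fun this f
  refine MvPolynomial.algHom_ext fun i => ?_
  fin_cases i <;> simp [subst, Fin.sum_univ_two]

lemma subst_X_zero (p q r s : ℂ) : subst !![p, q; r, s] (X 0) = C p * X 0 + C r * X 1 := by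
  simp [subst, Fin.sum_univ_two]

lemma subst_X_one (p q r s : ℂ) : subst !![p, q; r, s] (X 1) = C q * X 0 + C s * X 1 := by
  simp [subst, Fin.sum_univ_two]

lemma subst_homogenize_toPoly (P : Cubic ℂ) (p q r s : ℂ) :
    subst !![p, q; r, s] (P.toPoly.homogenize 3) =
      (P.linearSubst p q r s).toPoly.homogenize 3 := by
  simp only [Cubic.homogenize_toPoly, Cubic.linearSubst, map_add, map_mul, map_pow, subst_X_zero,
    subst_X_one, algHom_C, algebraMap_eq, map_ofNat]
  ring

namespace CubicEquiv

lemma of_det_ne_zero {f h : MvPolynomial (Fin 2) ℂ} (g : Matrix (Fin 2) (Fin 2) ℂ)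
    (hg : g.det ≠ 0) (hgf : subst g f = h) : CubicEquiv f h :=
  ⟨Matrix.GeneralLinearGroup.mkOfDetNeZero g hg, hgf⟩

lemma symm {f h : MvPolynomial (Fin 2) ℂ} : CubicEquiv f h → CubicEquiv h f := by
  rintro ⟨g, rfl⟩
  exact ⟨g⁻¹, by rw [subst_mul, ← Units.val_mul, inv_mul_cancel, Units.val_one, subst_one]⟩

lemma trans {f h k : MvPolynomial (Fin 2) ℂ} :
    CubicEquiv f h → CubicEquiv h k → CubicEquiv f k := by
  rintro ⟨g, rfl⟩ ⟨g', rfl⟩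
  exact ⟨g' * g, by rw [subst_mul, Units.val_mul]⟩

lemma exists_linearSubst {P Q : Cubic ℂ}
    (h : CubicEquiv (P.toPoly.homogenize 3) (Q.toPoly.homogenize 3)) :
    ∃ p q r s : ℂ, Q = P.linearSubst p q r s := by
  obtain ⟨g, hg⟩ := h
  rw [Matrix.eta_fin_two (g : Matrix (Fin 2) (Fin 2) ℂ), subst_homogenize_toPoly] at hg
  exact ⟨_, _, _, _, Cubic.homogenize_toPoly_injective hg.symm⟩

lemma discr_eq_zero {P Q : Cubic ℂ}
    (h : CubicEquiv (P.toPoly.homogenize 3) (Q.toPoly.homogenize 3)) (hP : P.discr = 0) :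
    Q.discr = 0 := by
  obtain ⟨p, q, r, s, rfl⟩ := h.exists_linearSubst
  rw [Cubic.discr_linearSubst, hP, mul_zero]

lemma hessianVanishes {P Q : Cubic ℂ}
    (h : CubicEquiv (P.toPoly.homogenize 3) (Q.toPoly.homogenize 3)) (hP : P.HessianVanishes) :
    Q.HessianVanishes := by
  obtain ⟨p, q, r, s, rfl⟩ := h.exists_linearSubst
  exact hP.linearSubst p q r s

end CubicEquiv

lemma X_zero_pow_three_eq :
    (X 0 ^ 3 : MvPolynomial (Fin 2) ℂ) = (⟨1, 0, 0, 0⟩ : Cubic ℂ).toPoly.homogenize 3 := by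
  simp [Cubic.homogenize_toPoly]

lemma X_zero_sq_mul_X_one_eq :
    (X 0 ^ 2 * X 1 : MvPolynomial (Fin 2) ℂ) = (⟨0, 1, 0, 0⟩ : Cubic ℂ).toPoly.homogenize 3 := by
  simp [Cubic.homogenize_toPoly]

lemma X_zero_pow_three_add_X_one_pow_three_eq :
    (X 0 ^ 3 + X 1 ^ 3 : MvPolynomial (Fin 2) ℂ) =
      (⟨1, 0, 0, 1⟩ : Cubic ℂ).toPoly.homogenize 3 := by
  simp [Cubic.homogenize_toPoly]

lemma not_cubicEquiv_X_zero_pow_three_X_zero_sq_mul_X_one :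
    ¬ CubicEquiv (X 0 ^ 3) (X 0 ^ 2 * X 1) := by
  rw [X_zero_pow_three_eq, X_zero_sq_mul_X_one_eq]
  intro h
  have := (h.hessianVanishes (by norm_num [Cubic.HessianVanishes])).1
  norm_num at this

lemma not_cubicEquiv_X_zero_pow_three_X_zero_pow_three_add_X_one_pow_three :
    ¬ CubicEquiv (X 0 ^ 3) (X 0 ^ 3 + X 1 ^ 3) := by
  rw [X_zero_pow_three_add_X_one_pow_three_eq, X_zero_pow_three_eq]
  intro h
  have := h.discr_eq_zero (by norm_num [Cubic.discr])
  norm_num [Cubic.discr] at this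

lemma not_cubicEquiv_X_zero_sq_mul_X_one_X_zero_pow_three_add_X_one_pow_three :
    ¬ CubicEquiv (X 0 ^ 2 * X 1) (X 0 ^ 3 + X 1 ^ 3) := by
  rw [X_zero_pow_three_add_X_one_pow_three_eq, X_zero_sq_mul_X_one_eq]
  intro h
  have := h.discr_eq_zero (by norm_num [Cubic.discr])
  norm_num [Cubic.discr] at this

lemma exists_cubicEquiv_homogenize_toPoly_of_ne_zero {f : MvPolynomial (Fin 2) ℂ} (hf : f ≠ 0)
    (hhom : f.IsHomogeneous 3) :
    ∃ P : Cubic ℂ, P.a ≠ 0 ∧ CubicEquiv f (P.toPoly.homogenize 3) := by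
  obtain ⟨P, rfl⟩ := Cubic.exists_homogenize_toPoly_eq hhom
  obtain ⟨v, hv⟩ : ∃ v : Fin 2 → ℂ, eval v (P.toPoly.homogenize 3) ≠ 0 := by
    by_contra! h
    exact hf (MvPolynomial.funext fun v => by simp [h v])
  obtain ⟨r, s, hdet⟩ : ∃ r s : ℂ, v 0 * s - v 1 * r ≠ 0 := by
    by_cases h0 : v 0 = 0
    · have h1 : v 1 ≠ 0 := fun h1 => hv (by simp [Cubic.homogenize_toPoly, h0, h1])
      exact ⟨1, 0, by simpa [h0] using h1⟩
    · exact ⟨0, 1, by simpa using h0⟩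
  refine ⟨P.linearSubst (v 0) (v 1) r s, by rwa [Cubic.linearSubst_a], ?_⟩
  exact .of_det_ne_zero _ (by rwa [Matrix.det_fin_two_of]) (subst_homogenize_toPoly ..)

lemma cubicEquiv_X_zero_pow_three {a : ℂ} (ha : a ≠ 0) (x : ℂ) :
    CubicEquiv (X 0 ^ 3) (C a * (X 0 - C x * X 1) * (X 0 - C x * X 1) * (X 0 - C x * X 1)) := by
  obtain ⟨t, ht⟩ := IsAlgClosed.exists_pow_nat_eq a three_pos
  have ht0 : t ≠ 0 := by rintro rfl; exact ha (by simp [← ht])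
  refine .of_det_ne_zero !![t, 0; -(t * x), 1] (by simpa [Matrix.det_fin_two_of] using ht0) ?_
  rw [map_pow, subst_X_zero, ← ht]
  simp only [map_pow, map_mul, map_neg]
  ring

lemma cubicEquiv_X_zero_sq_mul_X_one {a x z : ℂ} (ha : a ≠ 0) (hxz : x ≠ z) :
    CubicEquiv (X 0 ^ 2 * X 1)
      (C a * (X 0 - C x * X 1) * (X 0 - C x * X 1) * (X 0 - C z * X 1)) := by
  have hdet : !![1, a; -x, -(a * z)].det ≠ 0 := by
    rw [Matrix.det_fin_two_of]
    intro h
    exact mul_ne_zero ha (sub_ne_zero.mpr hxz) (by linear_combination h)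
  refine .of_det_ne_zero _ hdet ?_
  rw [map_mul, map_pow, subst_X_zero, subst_X_one]
  simp only [map_neg, map_mul, map_one]
  ring

lemma exists_sq_mul_eq_and_mul_sq_eq {K : Type*} [Field K] [IsAlgClosed K] {u v : K}
    (hu : u ≠ 0) (hv : v ≠ 0) : ∃ m n : K, m ^ 2 * n = u ∧ m * n ^ 2 = v := by
  obtain ⟨m, hm⟩ := IsAlgClosed.exists_pow_nat_eq (u ^ 2 / v) three_pos
  have hm0 : m ≠ 0 := by
    rintro rfl
    exact div_ne_zero (pow_ne_zero 2 hu) hv (by simp [← hm])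
  refine ⟨m, u / m ^ 2, by field_simp, ?_⟩
  field_simp
  rw [show m ^ 3 = u ^ 2 / v from hm]
  field_simp

lemma cubicEquiv_X_zero_mul_X_one_mul_add {a x y z : ℂ} (ha : a ≠ 0) (hxy : x ≠ y) (hxz : x ≠ z)
    (hyz : y ≠ z) :
    CubicEquiv (X 0 * X 1 * (X 0 + X 1))
      (C a * (X 0 - C x * X 1) * (X 0 - C y * X 1) * (X 0 - C z * X 1)) := by
  have hxy' : x - y ≠ 0 := sub_ne_zero.mpr hxy
  -- `(x - y) L_z = (z - y) L_x + (x - z) L_y` for `L_t = X 0 - t X 1`, so the substitution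
  -- `X 0 ↦ m L_x`, `X 1 ↦ n L_y` works when `m²n (x - y) = a (z - y)` and `mn² (x - y) = a (x - z)`
  obtain ⟨m, n, hm, hn⟩ := exists_sq_mul_eq_and_mul_sq_eq
    (div_ne_zero (mul_ne_zero ha (sub_ne_zero.mpr hyz.symm)) hxy')
    (div_ne_zero (mul_ne_zero ha (sub_ne_zero.mpr hxz)) hxy')
  rw [eq_div_iff hxy'] at hm hn
  have hmn : m * n ≠ 0 := by
    intro h
    exact mul_ne_zero ha (sub_ne_zero.mpr hyz.symm) (by linear_combination m * (x - y) * h - hm)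
  refine .of_det_ne_zero !![m, n; -(m * x), -(n * y)] ?_ ?_
  · rw [Matrix.det_fin_two_of]
    intro h
    exact mul_ne_zero hmn hxy' (by linear_combination h)
  · rw [map_mul, map_mul, map_add, subst_X_zero, subst_X_one]
    refine MvPolynomial.funext fun v => mul_right_cancel₀ hxy' ?_
    simp only [map_mul, map_add, map_sub, map_neg, eval_C, eval_X]
    linear_combination
      (v 0 - x * v 1) * (v 0 - y * v 1) * ((v 0 - x * v 1) * hm + (v 0 - y * v 1) * hn)

lemma cubicEquiv_X_zero_mul_X_one_mul_add_X_zero_pow_three_add_X_one_pow_three :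
    CubicEquiv (X 0 * X 1 * (X 0 + X 1)) (X 0 ^ 3 + X 1 ^ 3) := by
  obtain ⟨s, hs⟩ := IsAlgClosed.exists_eq_mul_self (-3 : ℂ)
  obtain ⟨ω, hω⟩ : ∃ ω : ℂ, ω ^ 2 + ω + 1 = 0 := ⟨(s - 1) / 2, by linear_combination -hs / 4⟩
  have hdet : !![-ω, -ω ^ 2; -ω, -1].det ≠ 0 := by
    rw [Matrix.det_fin_two_of]
    intro h
    have : (3 : ℂ) = 0 := by linear_combination (1 - (ω + 2) * (ω - 1)) * hω - (ω + 2) * h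
    norm_num at this
  -- `X 0 ↦ -ω (x + y)`, `X 1 ↦ -ω² (x + ω y)` sends `X 0 + X 1` to `x + ω² y`,
  -- and `(x + y) (x + ω y) (x + ω² y) = x³ + y³`
  refine .of_det_ne_zero _ hdet ?_
  rw [map_mul, map_mul, map_add, subst_X_zero, subst_X_one]
  refine MvPolynomial.funext fun v => ?_
  simp only [map_mul, map_add, map_neg, map_pow, eval_C, eval_X]
  linear_combination (-ω ^ 3 * v 0 ^ 3 - ω ^ 3 * v 0 ^ 2 * v 1 - ω ^ 2 * v 0 ^ 2 * v 1
    - ω ^ 2 * v 0 * v 1 ^ 2 + ω * v 0 ^ 3 - ω * v 0 * v 1 ^ 2 - v 0 ^ 3 - v 1 ^ 3) * hω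

lemma cubicEquiv_of_roots {a : ℂ} (ha : a ≠ 0) (x y z : ℂ) :
    CubicEquiv (X 0 ^ 3) (C a * (X 0 - C x * X 1) * (X 0 - C y * X 1) * (X 0 - C z * X 1)) ∨
    CubicEquiv (X 0 ^ 2 * X 1)
      (C a * (X 0 - C x * X 1) * (X 0 - C y * X 1) * (X 0 - C z * X 1)) ∨
    CubicEquiv (X 0 ^ 3 + X 1 ^ 3)
      (C a * (X 0 - C x * X 1) * (X 0 - C y * X 1) * (X 0 - C z * X 1)) := by
  rcases eq_or_ne x y with rfl | hxy
  · rcases eq_or_ne x z with rfl | hxz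
    · exact .inl (cubicEquiv_X_zero_pow_three ha x)
    · exact .inr (.inl (cubicEquiv_X_zero_sq_mul_X_one ha hxz))
  rcases eq_or_ne x z with rfl | hxz
  · refine .inr (.inl ?_)
    convert cubicEquiv_X_zero_sq_mul_X_one ha hxy using 1
    ring
  rcases eq_or_ne y z with rfl | hyz
  · refine .inr (.inl ?_)
    convert cubicEquiv_X_zero_sq_mul_X_one ha hxy.symm using 1
    ring
  exact .inr (.inr
    (cubicEquiv_X_zero_mul_X_one_mul_add_X_zero_pow_three_add_X_one_pow_three.symm.trans
      (cubicEquiv_X_zero_mul_X_one_mul_add ha hxy hxz hyz)))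

lemma exists_cubicEquiv_normal_form {f : MvPolynomial (Fin 2) ℂ} (hf : f ≠ 0)
    (hhom : f.IsHomogeneous 3) :
    CubicEquiv f (X 0 ^ 3) ∨ CubicEquiv f (X 0 ^ 2 * X 1) ∨ CubicEquiv f (X 0 ^ 3 + X 1 ^ 3) := by
  obtain ⟨P, ha, hfP⟩ := exists_cubicEquiv_homogenize_toPoly_of_ne_zero hf hhom
  obtain ⟨x, y, z, hP⟩ := Cubic.exists_homogenize_toPoly_eq_mul ha
  rw [hP] at hfP
  rcases cubicEquiv_of_roots ha x y z with h | h | h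
  exacts [.inl (hfP.trans h.symm), .inr (.inl (hfP.trans h.symm)), .inr (.inr (hfP.trans h.symm))]

/-- SLOCC classification of three bosonic qubits: every nonzero binary cubic over ℂ is
GL₂(ℂ)-equivalent to exactly one of x³ (separable), x²y (W-type) and x³ + y³ (GHZ-type). -/
theorem binary_cubic_classification (f : MvPolynomial (Fin 2) ℂ)
    (hf : f ≠ 0) (hhom : f.IsHomogeneous 3) :
    (CubicEquiv f (X 0 ^ 3) ∧ ¬ CubicEquiv f (X 0 ^ 2 * X 1)
        ∧ ¬ CubicEquiv f (X 0 ^ 3 + X 1 ^ 3)) ∨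
    (¬ CubicEquiv f (X 0 ^ 3) ∧ CubicEquiv f (X 0 ^ 2 * X 1)
        ∧ ¬ CubicEquiv f (X 0 ^ 3 + X 1 ^ 3)) ∨
    (¬ CubicEquiv f (X 0 ^ 3) ∧ ¬ CubicEquiv f (X 0 ^ 2 * X 1)
        ∧ CubicEquiv f (X 0 ^ 3 + X 1 ^ 3)) := by
  have h₁₂ := not_cubicEquiv_X_zero_pow_three_X_zero_sq_mul_X_one
  have h₁₃ := not_cubicEquiv_X_zero_pow_three_X_zero_pow_three_add_X_one_pow_three
  have h₂₃ := not_cubicEquiv_X_zero_sq_mul_X_one_X_zero_pow_three_add_X_one_pow_three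
  rcases exists_cubicEquiv_normal_form hf hhom with h | h | h
  · exact .inl ⟨h, fun h' => h₁₂ (h.symm.trans h'), fun h' => h₁₃ (h.symm.trans h')⟩
  · exact .inr (.inl ⟨fun h' => h₁₂ (h'.symm.trans h), h, fun h' => h₂₃ (h.symm.trans h')⟩)
  · exact .inr (.inr ⟨fun h' => h₁₃ (h'.symm.trans h), fun h' => h₂₃ (h'.symm.trans h), h⟩)

end
end
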